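/- Every smooth convex body K in ℝ^n (i.e., a convex body having a unique supporting hyperplane at each of its boundary points) can be illuminated by n + 1 directions; that is, i(K) ≤ n + 1. -/

import Mathlib

/-! If `u` makes an obtuse angle with the outer unit normal `ν` at a boundary point `b`, then `u`
illuminates `b`: otherwise the closed ray `b + ℝ≥0 • u` misses the interior of `K`, and a hyperplane
separating the two supports `K` at `b` with a normal `w` satisfying `⟪u, w⟫ ≥ 0`; smoothness forces
`w = ν`, a contradiction. The `n + 1` unit vectors `e₁, …, eₙ, -(e₁ + ⋯ + eₙ)/√n` make an obtuse angle
with every nonzero vector, so they illuminate every boundary point. -/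

open Set Metric MeasureTheory ProbabilityTheory InnerProductGeometry Real
open scoped InnerProductSpace

noncomputable section

/-- `ℝ^n` as a Euclidean space. -/
abbrev Euc (n : ℕ) : Type := EuclideanSpace ℝ (Fin n)

/-- A direction `u` illuminates the body `K` at the boundary point `b` if the ray
`{b + λ • u : λ > 0}` meets the interior of `K`. -/
def Illuminates {n : ℕ} (K : Set (Euc n)) (u b : Euc n) : Prop :=
  ∃ lam : ℝ, 0 < lam ∧ b + lam • u ∈ interior K

/-- A set `A` of directions illuminates `K` if every boundary point of `K` is illuminated
by some direction in `A`. -/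
def IlluminatedBy {n : ℕ} (K A : Set (Euc n)) : Prop :=
  ∀ b ∈ frontier K, ∃ u ∈ A, Illuminates K u b

/-- The illumination number of `K`: the minimum number of directions (unit vectors)
that together illuminate every boundary point of `K`. -/
def illumNumber {n : ℕ} (K : Set (Euc n)) : ℕ :=
  sInf {m | ∃ A : Finset (Euc n), (A : Set (Euc n)) ⊆ Metric.sphere (0 : Euc n) 1 ∧
    IlluminatedBy K (A : Set (Euc n)) ∧ A.card = m}

section

variable {E : Type*} [NormedAddCommGroup E] [InnerProductSpace ℝ E]

theorem Convex.exists_normal_inner_nonneg_of_ray [CompleteSpace E] {K : Set E} (hK : Convex ℝ K)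
    (hKint : (interior K).Nonempty) {b u : E} (hb : b ∈ closure K)
    (hray : ∀ t : ℝ, 0 ≤ t → b + t • u ∉ interior K) :
    ∃ v ≠ 0, (∀ x ∈ K, ⟪x, v⟫_ℝ ≤ ⟪b, v⟫_ℝ) ∧ 0 ≤ ⟪u, v⟫_ℝ := by
  have hconv : Convex ℝ ((fun t : ℝ => b + t • u) '' Ici 0) := by
    simpa only [image_image] using
      ((convex_Ici 0).is_linear_image (IsLinearMap.isLinearMap_smul' (R := ℝ) u)).translate b
  have hdisj : Disjoint (interior K) ((fun t : ℝ => b + t • u) '' Ici 0) := by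
    rw [Set.disjoint_right]
    rintro _ ⟨t, ht, rfl⟩
    exact hray t ht
  obtain ⟨f, c, hf0, hfK, hfray⟩ := geometric_hahn_banach_of_nonempty_interior hK hconv hdisj hKint
    ⟨b, 0, self_mem_Ici, by simp⟩
  have hfb : f b = c := le_antisymm
    (closure_minimal hfK (isClosed_le f.continuous continuous_const) hb)
    (hfray b ⟨0, self_mem_Ici, by simp⟩)
  have hfu : c ≤ f (b + u) := hfray (b + u) ⟨1, zero_le_one' ℝ, by simp⟩
  set v := (InnerProductSpace.toDual ℝ E).symm f
  have hv : ∀ x, ⟪x, v⟫_ℝ = f x := fun x => by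
    rw [real_inner_comm, InnerProductSpace.toDual_symm_apply]
  refine ⟨v, by simpa [v] using hf0, fun x hx => ?_, ?_⟩
  · rw [hv, hv, hfb]
    exact hfK x hx
  · rw [map_add, hfb] at hfu
    rw [hv]
    linarith

theorem Convex.exists_pos_add_smul_mem_interior_of_inner_neg [CompleteSpace E] {K : Set E}
    (hK : Convex ℝ K) (hKint : (interior K).Nonempty) {b ν u : E} (hb : b ∈ frontier K)
    (hν : ∀ w, ‖w‖ = 1 ∧ (∀ x ∈ K, ⟪x, w⟫_ℝ ≤ ⟪b, w⟫_ℝ) → w = ν) (hu : ⟪u, ν⟫_ℝ < 0) :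
    ∃ t : ℝ, 0 < t ∧ b + t • u ∈ interior K := by
  by_contra! hray
  have hray' : ∀ t : ℝ, 0 ≤ t → b + t • u ∉ interior K := by
    intro t ht
    rcases ht.eq_or_lt with rfl | ht
    · simpa using hb.2
    · exact hray t ht
  obtain ⟨v, hv0, hvK, hvu⟩ := hK.exists_normal_inner_nonneg_of_ray hKint hb.1 hray'
  have hνv : ‖v‖⁻¹ • v = ν := by
    refine hν _ ⟨norm_smul_inv_norm hv0, fun x hx => ?_⟩
    simp only [real_inner_smul_right]
    exact mul_le_mul_of_nonneg_left (hvK x hx) (by positivity)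
  have : 0 ≤ ⟪u, ν⟫_ℝ := by
    rw [← hνv, real_inner_smul_right]
    positivity
  linarith

theorem exists_finset_sphere_card_le_forall_inner_neg (E : Type*) [NormedAddCommGroup E]
    [InnerProductSpace ℝ E] [FiniteDimensional ℝ E] :
    ∃ A : Finset E, (A : Set E) ⊆ sphere 0 1 ∧ A.card ≤ Module.finrank ℝ E + 1 ∧
      ∀ ν ≠ 0, ∃ u ∈ A, ⟪u, ν⟫_ℝ < 0 := by
  classical
  rcases subsingleton_or_nontrivial E with hE | hE
  · exact ⟨∅, by simp, by simp, fun ν hν => absurd (Subsingleton.elim ν 0) hν⟩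
  set e := stdOrthonormalBasis ℝ E
  set s := ∑ i, e i
  have hs : s ≠ 0 := by
    obtain ⟨i⟩ : Nonempty (Fin (Module.finrank ℝ E)) := Fin.pos_iff_nonempty.mp Module.finrank_pos
    intro h
    have := e.orthonormal.inner_right_fintype (fun _ => (1 : ℝ)) i
    simp only [one_smul] at this
    change ⟪e i, s⟫_ℝ = 1 at this
    rw [h, inner_zero_right] at this
    exact zero_ne_one this
  refine ⟨insert (-(‖s‖⁻¹ • s)) (Finset.univ.image e), ?_, ?_, ?_⟩
  · intro u hu
    rw [mem_sphere_zero_iff_norm]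
    simp only [Finset.coe_insert, Finset.coe_image, Finset.coe_univ, image_univ, mem_insert_iff,
      mem_range] at hu
    rcases hu with rfl | ⟨i, rfl⟩
    · rw [norm_neg]
      exact norm_smul_inv_norm hs
    · exact e.norm_eq_one i
  · calc _ ≤ (Finset.univ.image e).card + 1 := Finset.card_insert_le _ _
      _ ≤ _ := by simpa using Finset.card_image_le (s := Finset.univ) (f := e)
  · intro ν hν
    by_contra! h
    have hcoord : ∀ i, 0 ≤ ⟪e i, ν⟫_ℝ := fun i =>
      h _ (Finset.mem_insert_of_mem (Finset.mem_image_of_mem _ (Finset.mem_univ i)))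
    have hsum : ∑ i, ⟪e i, ν⟫_ℝ ≤ 0 := by
      have := h _ (Finset.mem_insert_self _ _)
      rw [inner_neg_left, real_inner_smul_left, sum_inner] at this
      exact nonpos_of_mul_nonpos_right (neg_nonneg.mp this) (by positivity)
    have hzero : ∀ i, ⟪e i, ν⟫_ℝ = 0 := fun i =>
      (Finset.sum_eq_zero_iff_of_nonneg fun i _ => hcoord i).mp
        (hsum.antisymm (Finset.sum_nonneg fun i _ => hcoord i)) i (Finset.mem_univ i)
    exact hν (by rw [← e.sum_repr' ν]; simp [hzero])

end

theorem illumNumber_le_card {n : ℕ} {K : Set (Euc n)} {A : Finset (Euc n)}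
    (hA : (A : Set (Euc n)) ⊆ sphere 0 1) (hKA : IlluminatedBy K A) : illumNumber K ≤ A.card :=
  Nat.sInf_le ⟨A, hA, hKA, rfl⟩

theorem illumNumber_le_of_smooth_general {n : ℕ} (K : Set (Euc n))
    (hKconv : Convex ℝ K) (hKint : (interior K).Nonempty)
    (hsmooth : ∀ b ∈ frontier K, ∃! u : Euc n, ‖u‖ = 1 ∧ ∀ x ∈ K, ⟪x, u⟫_ℝ ≤ ⟪b, u⟫_ℝ) :
    illumNumber K ≤ n + 1 := by
  obtain ⟨A, hA_sphere, hA_card, hA_neg⟩ := exists_finset_sphere_card_le_forall_inner_neg (Euc n)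
  have hKA : IlluminatedBy K A := by
    intro b hb
    obtain ⟨ν, ⟨hν, -⟩, hν_uniq⟩ := hsmooth b hb
    obtain ⟨u, huA, hu⟩ := hA_neg ν (norm_ne_zero_iff.mp (hν ▸ one_ne_zero))
    exact ⟨u, huA, hKconv.exists_pos_add_smul_mem_interior_of_inner_neg hKint hb hν_uniq hu⟩
  calc illumNumber K ≤ A.card := illumNumber_le_card hA_sphere hKA
    _ ≤ n + 1 := by simpa using hA_card

/-- Every smooth convex body (unique supporting hyperplane, i.e. unique outer unit normal,
at each boundary point) in `ℝ^n` can be illuminated by `n + 1` directions. -/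
theorem illumNumber_le_of_smooth {n : ℕ} (K : Set (Euc n))
    (hKcomp : IsCompact K) (hKconv : Convex ℝ K) (hKint : (interior K).Nonempty)
    (hsmooth : ∀ b ∈ frontier K, ∃! u : Euc n, ‖u‖ = 1 ∧ ∀ x ∈ K, ⟪x, u⟫_ℝ ≤ ⟪b, u⟫_ℝ) :
    illumNumber K ≤ n + 1 :=
  illumNumber_le_of_smooth_general K hKconv hKint hsmooth
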